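/- Let v₁, v₂ ∈ ℝ² be linearly independent vectors, and let a, b, c be the point reflections of ℝ² given by a(x) = v₁ − x, b(x) = (v₁ + v₂) − x, c(x) = v₂ − x. Then the subgroup of the group of affine equivalences of ℝ² generated by {a, b, c} is isomorphic to the semidirect product (ℤ × ℤ) ⋊ ℤ/2ℤ, where the nontrivial element of ℤ/2ℤ acts on ℤ × ℤ by negation. -/

import Mathlib

/-!
Conjugation by the point reflection `a` negates translations, so `(m, n, ε)` ↦
`(x ↦ x + m v₁ + n v₂) ∘ aᵉ` is a homomorphism from `(ℤ × ℤ) ⋊ ℤ/2ℤ`. Its image is generated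
by `a, b, c`: `b c` and `b a` are the translations by `v₁` and `v₂`, and `b`, `c` are translates
of `a`. It is injective because `v₁, v₂` are `ℤ`-linearly independent and a point reflection is
never a translation.
-/

/-- The action of `ℤ/2ℤ` on a commutative group `M` in which the nontrivial element
acts by inversion (negation, in additive language). -/
def negAct (M : Type*) [CommGroup M] : Multiplicative (ZMod 2) →* MulAut M where
  toFun g := if Multiplicative.toAdd g = 0 then 1 else MulEquiv.inv M
  map_one' := by simp
  map_mul' g h := by
    have hinv : MulEquiv.inv M * MulEquiv.inv M = 1 := by
      ext x; simp
    by_cases hg : Multiplicative.toAdd g = 0 <;> by_cases hh : Multiplicative.toAdd h = 0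
    · simp [hg, hh]
    · simp [hg, hh]
    · simp [hg, hh]
    · have h1 : ∀ x : ZMod 2, x ≠ 0 → x = 1 := by decide
      have h2 : (1 : ZMod 2) + 1 = 0 := by decide
      have : Multiplicative.toAdd (g * h) = 0 := by
        simp [h1 _ hg, h1 _ hh, h2]
      simp [this, hg, hh, hinv]

theorem negAct_ofAdd_one (M : Type*) [CommGroup M] :
    negAct M (Multiplicative.ofAdd 1) = MulEquiv.inv M := by
  simp [negAct]

theorem ZMod.eq_one_or_eq_ofAdd_one (g : Multiplicative (ZMod 2)) :
    g = 1 ∨ g = Multiplicative.ofAdd 1 := by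
  revert g; decide

section Involution

variable {G : Type*} [Group G]

def involutionHom (s : G) (hs : s * s = 1) : Multiplicative (ZMod 2) →* G :=
  AddMonoidHom.toMultiplicativeLeft
    (ZMod.lift 2 ⟨zmultiplesHom (Additive G) (Additive.ofMul s), by
      simpa [two_zsmul] using congrArg Additive.ofMul hs⟩)

@[simp]
theorem involutionHom_ofAdd_one (s : G) (hs : s * s = 1) :
    involutionHom s hs (Multiplicative.ofAdd 1) = s := by
  have h1 : (1 : ZMod 2) = ((1 : ℤ) : ZMod 2) := Int.cast_one.symm
  simp only [involutionHom, AddMonoidHom.toMultiplicativeLeft_apply_apply, toAdd_ofAdd, h1,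
    ZMod.lift_coe, zmultiplesHom_apply, one_zsmul, toMul_ofMul]

end Involution

namespace SemidirectProduct

variable {N G H : Type*} [Group N] [Group G] [Group H] {φ : G →* MulAut N}
  {fn : N →* H} {fg : G →* H}
  (h : ∀ g, fn.comp (φ g).toMonoidHom = (MulAut.conj (fg g)).toMonoidHom.comp fn)

include h in
theorem range_lift : (lift fn fg h).range = fn.range ⊔ fg.range := by
  refine le_antisymm ?_ (sup_le ?_ ?_)
  · rintro _ ⟨x, rfl⟩
    rw [← inl_left_mul_inr_right x, map_mul, lift_inl, lift_inr]
    exact Subgroup.mul_mem _ (Subgroup.mem_sup_left ⟨_, rfl⟩) (Subgroup.mem_sup_right ⟨_, rfl⟩)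
  · rintro _ ⟨n, rfl⟩
    exact ⟨inl n, lift_inl ..⟩
  · rintro _ ⟨g, rfl⟩
    exact ⟨inr g, lift_inr ..⟩

include h in
theorem lift_injective (hfn : Function.Injective fn) (hfg : ∀ n g, fn n = fg g → g = 1) :
    Function.Injective (lift fn fg h) := by
  refine (injective_iff_map_eq_one _).mpr fun x hx => ?_
  rw [← inl_left_mul_inr_right x, map_mul, lift_inl, lift_inr, mul_eq_one_iff_eq_inv,
    ← map_inv] at hx
  have hr : x.right = 1 := inv_eq_one.mp (hfg _ _ hx)
  rw [hr, inv_one, map_one, ← map_one fn] at hx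
  ext
  · exact hfn hx
  · exact hr

end SemidirectProduct

namespace AffineEquiv

variable {k V : Type*} [Ring k] [AddCommGroup V] [Module k V]

variable (k) in
def subLeft (w : V) : V ≃ᵃ[k] V :=
  (LinearEquiv.neg k).toAffineEquiv.trans (constVAdd k V w)

@[simp]
theorem subLeft_apply (w x : V) : subLeft k w x = w - x := by
  simp [subLeft, sub_eq_add_neg]

theorem subLeft_mul_subLeft (u w : V) : subLeft k u * subLeft k w = constVAdd k V (u - w) := by
  ext x
  simp only [coe_mul, Function.comp_apply, subLeft_apply, constVAdd_apply, vadd_eq_add]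
  abel

theorem constVAdd_mul_subLeft (v w : V) : constVAdd k V v * subLeft k w = subLeft k (v + w) := by
  ext x
  simp [add_sub_assoc]

theorem subLeft_mul_self (w : V) : subLeft k w * subLeft k w = 1 := by
  rw [subLeft_mul_subLeft, sub_self, constVAdd_zero]
  rfl

theorem subLeft_conj_constVAdd (v w : V) :
    subLeft k w * constVAdd k V v * (subLeft k w)⁻¹ = constVAdd k V (-v) := by
  rw [inv_eq_of_mul_eq_one_right (subLeft_mul_self w), mul_assoc, constVAdd_mul_subLeft,
    subLeft_mul_subLeft]
  simp

theorem constVAdd_ne_subLeft [Nontrivial V] [IsAddTorsionFree V] (v w : V) :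
    constVAdd k V v ≠ subLeft k w := by
  intro h
  obtain ⟨x, hx⟩ := exists_ne (0 : V)
  have h0 : v = w := by simpa using congrArg (· 0) h
  have hx' : v + x = w - x := by simpa using congrArg (· x) h
  rw [h0, sub_eq_add_neg, add_right_inj, eq_neg_iff_add_eq_zero, ← two_nsmul] at hx'
  exact hx ((nsmul_eq_zero_iff_right two_ne_zero).mp hx')

section PointReflections

variable {M : Type*} [AddCommGroup M]

variable (k) in
def translationHom (t : M →+ V) : Multiplicative M →* V ≃ᵃ[k] V :=
  (constVAddHom k V).comp (AddMonoidHom.toMultiplicative t)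

@[simp]
theorem translationHom_apply (t : M →+ V) (m : Multiplicative M) :
    translationHom k t m = constVAdd k V (t m.toAdd) :=
  rfl

theorem translationHom_injective {t : M →+ V} (ht : Function.Injective t) :
    Function.Injective (translationHom k t) := fun m n hmn =>
  Multiplicative.toAdd.injective (ht (by simpa using congrArg (· 0) hmn))

theorem translationHom_negAct (t : M →+ V) (w : V) (g : Multiplicative (ZMod 2)) :
    (translationHom k t).comp (negAct (Multiplicative M) g).toMonoidHom =
      (MulAut.conj (involutionHom (subLeft k w) (subLeft_mul_self w) g)).toMonoidHom.comp
        (translationHom k t) := by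
  refine MonoidHom.ext fun m => ?_
  rcases ZMod.eq_one_or_eq_ofAdd_one g with rfl | rfl
  · simp
  · simp [negAct_ofAdd_one, subLeft_conj_constVAdd]

variable (k) in
def pointReflectionHom (t : M →+ V) (w : V) :
    Multiplicative M ⋊[negAct (Multiplicative M)] Multiplicative (ZMod 2) →* V ≃ᵃ[k] V :=
  SemidirectProduct.lift (translationHom k t) (involutionHom (subLeft k w) (subLeft_mul_self w))
    (translationHom_negAct t w)

theorem pointReflectionHom_injective [Nontrivial V] [IsAddTorsionFree V] {t : M →+ V}
    (ht : Function.Injective t) (w : V) : Function.Injective (pointReflectionHom k t w) := by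
  refine SemidirectProduct.lift_injective _ (translationHom_injective ht) fun m g hmg => ?_
  rcases ZMod.eq_one_or_eq_ofAdd_one g with rfl | rfl
  · rfl
  · exact absurd hmg (by simpa using constVAdd_ne_subLeft _ w)

end PointReflections

theorem closure_subLeft_eq_range_pointReflectionHom (v₁ v₂ : V) :
    Subgroup.closure {subLeft k v₁, subLeft k (v₁ + v₂), subLeft k v₂} =
      (pointReflectionHom k ((zmultiplesHom V v₁).coprod (zmultiplesHom V v₂)) v₁).range := by
  rw [pointReflectionHom, SemidirectProduct.range_lift]
  set S := Subgroup.closure {subLeft k v₁, subLeft k (v₁ + v₂), subLeft k v₂}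
  have hs₁ : subLeft k v₁ ∈ S := Subgroup.subset_closure (by simp)
  have hs₁₂ : subLeft k (v₁ + v₂) ∈ S := Subgroup.subset_closure (by simp)
  have hs₂ : subLeft k v₂ ∈ S := Subgroup.subset_closure (by simp)
  have hτ₁ : constVAdd k V v₁ ∈ S := by
    simpa [subLeft_mul_subLeft] using Subgroup.mul_mem _ hs₁₂ hs₂
  have hτ₂ : constVAdd k V v₂ ∈ S := by
    simpa [subLeft_mul_subLeft] using Subgroup.mul_mem _ hs₁₂ hs₁
  refine le_antisymm ((Subgroup.closure_le _).mpr ?_) (sup_le ?_ ?_)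
  · have hσ : subLeft k v₁ ∈ (involutionHom _ (subLeft_mul_self (k := k) v₁)).range :=
      ⟨Multiplicative.ofAdd 1, involutionHom_ofAdd_one ..⟩
    have hτ (m : ℤ × ℤ) : constVAdd k V (m.1 • v₁ + m.2 • v₂) ∈ (translationHom k
        ((zmultiplesHom V v₁).coprod (zmultiplesHom V v₂))).range :=
      ⟨Multiplicative.ofAdd m, rfl⟩
    rintro _ (rfl | rfl | rfl)
    · exact Subgroup.mem_sup_right hσ
    · rw [add_comm, ← constVAdd_mul_subLeft]
      exact Subgroup.mul_mem _ (Subgroup.mem_sup_left (by simpa using hτ (0, 1)))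
        (Subgroup.mem_sup_right hσ)
    · rw [← neg_add_cancel_right v₂ v₁, ← constVAdd_mul_subLeft]
      exact Subgroup.mul_mem _ (Subgroup.mem_sup_left (by simpa [add_comm] using hτ (-1, 1)))
        (Subgroup.mem_sup_right hσ)
  · rintro _ ⟨m, rfl⟩
    rw [translationHom_apply, AddMonoidHom.coprod_apply, constVAdd_add, ← mul_def]
    simp only [zmultiplesHom_apply, constVAdd_zsmul]
    exact Subgroup.mul_mem _ (Subgroup.zpow_mem _ hτ₁ _) (Subgroup.zpow_mem _ hτ₂ _)
  · rintro _ ⟨g, rfl⟩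
    rcases ZMod.eq_one_or_eq_ofAdd_one g with rfl | rfl
    · exact Subgroup.one_mem _
    · simpa using hs₁

end AffineEquiv

theorem LinearIndependent.injective_coprod_zmultiplesHom {k V : Type*} [Ring k] [CharZero k]
    [AddCommGroup V] [Module k V] {v₁ v₂ : V} (hv : LinearIndependent k ![v₁, v₂]) :
    Function.Injective ((zmultiplesHom V v₁).coprod (zmultiplesHom V v₂)) := by
  refine (injective_iff_map_eq_zero _).mpr fun m hm => ?_
  obtain ⟨h₁, h₂⟩ := LinearIndependent.pair_iff.mp (hv.restrict_scalars' ℤ) m.1 m.2 hm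
  exact Prod.ext h₁ h₂

theorem stmt_9 (v₁ v₂ : ℝ × ℝ) (hv : LinearIndependent ℝ ![v₁, v₂])
    (a b c : (ℝ × ℝ) ≃ᵃ[ℝ] (ℝ × ℝ))
    (ha : ∀ x : ℝ × ℝ, a x = v₁ - x)
    (hb : ∀ x : ℝ × ℝ, b x = (v₁ + v₂) - x)
    (hc : ∀ x : ℝ × ℝ, c x = v₂ - x) :
    Nonempty
      ((Subgroup.closure ({a, b, c} : Set ((ℝ × ℝ) ≃ᵃ[ℝ] (ℝ × ℝ)))) ≃*
        (Multiplicative (ℤ × ℤ) ⋊[negAct (Multiplicative (ℤ × ℤ))]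
          Multiplicative (ZMod 2))) := by
  obtain rfl : a = AffineEquiv.subLeft ℝ v₁ := AffineEquiv.ext fun x => by simp [ha]
  obtain rfl : b = AffineEquiv.subLeft ℝ (v₁ + v₂) := AffineEquiv.ext fun x => by simp [hb]
  obtain rfl : c = AffineEquiv.subLeft ℝ v₂ := AffineEquiv.ext fun x => by simp [hc]
  rw [AffineEquiv.closure_subLeft_eq_range_pointReflectionHom]
  exact ⟨(MonoidHom.ofInjective (AffineEquiv.pointReflectionHom_injective
    hv.injective_coprod_zmultiplesHom v₁)).symm⟩
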